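/- arXiv:1902.04768 — 3 statements merged into one kernel-verified Lean document; each statement's English description precedes it below -/
import Mathlib

section
/- Assume f : ℝ → ℝ^N is differentiable at ε = 0 and satisfies the perturbed stationarity equation on a neighborhood of 0, and assume that for each j ≤ l the function s ↦ ℓ'(y_j, s) is differentiable at f(0)_j with derivative d_j. Let F ∈ ℝ^{N×N} be the diagonal matrix with F_{jj} = d_j for j ≤ l and F_{jj} = 0 for j > l, and set H = (1/l)·K·F + 2γ_A·I + (2γ_I/N²)·K·L. If H is invertible, then the derivative of f at 0 (the Bouligand influence function column for the held-out fold) is given by f'(0) = H^{-1} · [ −(1/m)·K_i·μ_i(0) − 2γ_A·f(0) − (2γ_I/(m+n)²)·K_i·L_i·f_i(0) ]. -/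
open Matrix

lemma hasDerivAt_mulVec {p q : ℕ} (A : Matrix (Fin p) (Fin q) ℝ) {g : ℝ → Fin q → ℝ}
    {g' : Fin q → ℝ} {t : ℝ} (hg : HasDerivAt g g' t) :
    HasDerivAt (fun ε => A.mulVec (g ε)) (A.mulVec g') t := by
  rw [hasDerivAt_pi] at hg ⊢
  intro i
  simp only [Matrix.mulVec, dotProduct]
  exact HasDerivAt.fun_sum fun j _ => (hg j).const_mul _

/-- If the perturbed manifold-regularization solution curve `f` is
differentiable at `ε = 0`, satisfies the perturbed stationarity equation near `0`, the loss
derivative `ℓ'(y_j, ·)` is differentiable at `f(0)_j` with derivative `d_j`, and the matrix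
`H = (1/l)·K·F + 2γ_A·I + (2γ_I/N²)·K·L` is invertible, then the Bouligand influence function
column `f'(0)` equals
`H⁻¹·[−(1/m)·K_i·μ_i(0) − 2γ_A·f(0) − (2γ_I/(m+n)²)·K_i·L_i·f_i(0)]`. -/
theorem bif_column_formula
    (l u m n : ℕ) (hl : 1 ≤ l) (hu : 1 ≤ u) (hm : 1 ≤ m) (hn : 1 ≤ n) (hml : m ≤ l)
    (K L : Matrix (Fin (l + u)) (Fin (l + u)) ℝ) (hK : K.IsSymm) (hL : L.IsSymm)
    (y : Fin l → ℝ) (γA γI : ℝ)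
    (σ : Fin (m + n) → Fin (l + u)) (hσ : Function.Injective σ)
    (hσl : ∀ j : Fin (m + n), (j : ℕ) < m → ((σ j : ℕ) < l))
    (Ki : Matrix (Fin (l + u)) (Fin (m + n)) ℝ)
    (hKi : ∀ (k : Fin (l + u)) (j : Fin (m + n)), Ki k j = K k (σ j))
    (Li : Matrix (Fin (m + n)) (Fin (m + n)) ℝ) (hLi : Li.IsSymm)
    (ℓ' : ℝ → ℝ → ℝ)
    (f : ℝ → Fin (l + u) → ℝ) (D : Fin (l + u) → ℝ)
    (hf : HasDerivAt f D 0)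
    (μ : ℝ → Fin (l + u) → ℝ)
    (hμ : ∀ (ε : ℝ) (j : Fin (l + u)),
      μ ε j = if h : (j : ℕ) < l then ℓ' (y ⟨j, h⟩) (f ε j) else 0)
    (μi : ℝ → Fin (m + n) → ℝ)
    (hμi : ∀ (ε : ℝ) (j : Fin (m + n)),
      μi ε j = if h : (j : ℕ) < m then ℓ' (y ⟨σ j, hσl j h⟩) (f ε (σ j)) else 0)
    (fi : ℝ → Fin (m + n) → ℝ)
    (hfi : ∀ (ε : ℝ) (j : Fin (m + n)), fi ε j = f ε (σ j))
    (hstat : ∀ᶠ ε in nhds (0 : ℝ),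
      (-(2 * γA)) • f ε =
        ((1 - ε) / (l : ℝ)) • K.mulVec (μ ε)
        + ((1 - ε) * (2 * γI) / ((l : ℝ) + (u : ℝ)) ^ 2) • K.mulVec (L.mulVec (f ε))
        + (ε / (m : ℝ)) • Ki.mulVec (μi ε)
        + (ε * (2 * γI) / ((m : ℝ) + (n : ℝ)) ^ 2) • Ki.mulVec (Li.mulVec (fi ε)))
    (d : Fin l → ℝ)
    (hd : ∀ j : Fin l,
      HasDerivAt (fun s => ℓ' (y j) s) (d j) (f 0 (Fin.castLE (Nat.le_add_right l u) j)))
    (F : Matrix (Fin (l + u)) (Fin (l + u)) ℝ)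
    (hF : F = Matrix.diagonal (fun j : Fin (l + u) =>
      if h : (j : ℕ) < l then d ⟨j, h⟩ else 0))
    (H : Matrix (Fin (l + u)) (Fin (l + u)) ℝ)
    (hH : H = (1 / (l : ℝ)) • (K * F) + (2 * γA) • 1
        + (2 * γI / ((l : ℝ) + (u : ℝ)) ^ 2) • (K * L))
    (hHinv : IsUnit H.det) :
    D = H⁻¹.mulVec (
      (-(1 / (m : ℝ))) • Ki.mulVec (μi 0)
      - (2 * γA) • f 0
      - (2 * γI / ((m : ℝ) + (n : ℝ)) ^ 2) • Ki.mulVec (Li.mulVec (fi 0))) := by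
  have hfj : ∀ j, HasDerivAt (fun ε => f ε j) (D j) 0 := hasDerivAt_pi.mp hf
  -- derivative of μ
  set μ' : Fin (l + u) → ℝ :=
    fun j => if h : (j : ℕ) < l then d ⟨j, h⟩ * D j else 0 with hμ'def
  have hμ' : HasDerivAt μ μ' 0 := by
    rw [hasDerivAt_pi]
    intro j
    have heq : (fun ε => μ ε j)
        = fun ε => if h : (j : ℕ) < l then ℓ' (y ⟨j, h⟩) (f ε j) else 0 :=
      funext fun ε => hμ ε j
    rw [heq, hμ'def]
    by_cases h : (j : ℕ) < l
    · simp only [dif_pos h]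
      exact (hd ⟨j, h⟩).comp 0 (hfj j)
    · simp only [dif_neg h]
      exact hasDerivAt_const 0 0
  -- derivative of μi
  set μi' : Fin (m + n) → ℝ :=
    fun j => if h : (j : ℕ) < m then d ⟨σ j, hσl j h⟩ * D (σ j) else 0 with hμi'def
  have hμi' : HasDerivAt μi μi' 0 := by
    rw [hasDerivAt_pi]
    intro j
    have heq : (fun ε => μi ε j)
        = fun ε => if h : (j : ℕ) < m then ℓ' (y ⟨σ j, hσl j h⟩) (f ε (σ j)) else 0 :=
      funext fun ε => hμi ε j
    rw [heq, hμi'def]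
    by_cases h : (j : ℕ) < m
    · simp only [dif_pos h]
      exact (hd ⟨σ j, hσl j h⟩).comp 0 (hfj (σ j))
    · simp only [dif_neg h]
      exact hasDerivAt_const 0 0
  -- derivative of fi
  have hfi' : HasDerivAt fi (fun j => D (σ j)) 0 := by
    rw [hasDerivAt_pi]
    intro j
    have heq : (fun ε => fi ε j) = fun ε => f ε (σ j) := funext fun ε => hfi ε j
    rw [heq]
    exact hfj (σ j)
  -- scalar coefficient derivatives
  have hc1 : HasDerivAt (fun ε : ℝ => (1 - ε) / (l : ℝ)) (-1 / (l : ℝ)) 0 :=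
    ((hasDerivAt_id (0 : ℝ)).const_sub 1).div_const (l : ℝ)
  have hc2 : HasDerivAt (fun ε : ℝ => (1 - ε) * (2 * γI) / ((l : ℝ) + (u : ℝ)) ^ 2)
      (-1 * (2 * γI) / ((l : ℝ) + (u : ℝ)) ^ 2) 0 :=
    (((hasDerivAt_id (0 : ℝ)).const_sub 1).mul_const (2 * γI)).div_const _
  have hc3 : HasDerivAt (fun ε : ℝ => ε / (m : ℝ)) (1 / (m : ℝ)) 0 :=
    (hasDerivAt_id (0 : ℝ)).div_const (m : ℝ)
  have hc4 : HasDerivAt (fun ε : ℝ => ε * (2 * γI) / ((m : ℝ) + (n : ℝ)) ^ 2)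
      (1 * (2 * γI) / ((m : ℝ) + (n : ℝ)) ^ 2) 0 :=
    ((hasDerivAt_id (0 : ℝ)).mul_const (2 * γI)).div_const _
  -- vector term derivatives
  have hv1 := hasDerivAt_mulVec K hμ'
  have hv2 := hasDerivAt_mulVec K (hasDerivAt_mulVec L hf)
  have hv3 := hasDerivAt_mulVec Ki hμi'
  have hv4 := hasDerivAt_mulVec Ki (hasDerivAt_mulVec Li hfi')
  have hR := (((hc1.smul hv1).add (hc2.smul hv2)).add (hc3.smul hv3)).add (hc4.smul hv4)
  have hev : (fun ε => (-(2 * γA)) • f ε) =ᶠ[nhds (0 : ℝ)]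
      (fun ε => ((1 - ε) / (l : ℝ)) • K.mulVec (μ ε)
        + ((1 - ε) * (2 * γI) / ((l : ℝ) + (u : ℝ)) ^ 2) • K.mulVec (L.mulVec (f ε))
        + (ε / (m : ℝ)) • Ki.mulVec (μi ε)
        + (ε * (2 * γI) / ((m : ℝ) + (n : ℝ)) ^ 2) • Ki.mulVec (Li.mulVec (fi ε))) := hstat
  have hDR := HasDerivAt.unique (hev.hasDerivAt_iff.mp (hf.const_smul (-(2 * γA)))) hR
  have hstat0 := hstat.self_of_nhds
  -- relate F.mulVec D to μ'
  have hFD : F.mulVec D = μ' := by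
    funext j
    rw [hF, Matrix.mulVec_diagonal, hμ'def]
    by_cases h : (j : ℕ) < l
    · simp [h]
    · simp [h]
  have key : H.mulVec D =
      (-(1 / (m : ℝ))) • Ki.mulVec (μi 0)
      - (2 * γA) • f 0
      - (2 * γI / ((m : ℝ) + (n : ℝ)) ^ 2) • Ki.mulVec (Li.mulVec (fi 0)) := by
    rw [hH]
    funext k
    have h1k := congrFun hDR k
    have h2k := congrFun hstat0 k
    simp only [Pi.add_apply, Pi.smul_apply, Pi.sub_apply, smul_eq_mul, Pi.neg_apply] at h1k h2k ⊢
    rw [Matrix.add_mulVec, Matrix.add_mulVec, Matrix.smul_mulVec,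
      Matrix.smul_mulVec, Matrix.smul_mulVec, Matrix.one_mulVec,
      ← Matrix.mulVec_mulVec, ← Matrix.mulVec_mulVec, hFD]
    simp only [Pi.add_apply, Pi.smul_apply, smul_eq_mul]
    linear_combination -h1k - h2k
  calc D = (H⁻¹ * H).mulVec D := by rw [Matrix.nonsing_inv_mul H hHinv, Matrix.one_mulVec]
    _ = H⁻¹.mulVec (H.mulVec D) := (Matrix.mulVec_mulVec D H⁻¹ H).symm
    _ = _ := by rw [key]
end

section
/- Assume f : ℝ → ℝ^N is differentiable at ε = 0 and satisfies the perturbed stationarity equation on a neighborhood of 0, and assume that for each j ≤ l the function s ↦ ℓ'(y_j, s) is differentiable at f(0)_j with derivative d_j. Let F ∈ ℝ^{N×N} be the diagonal matrix with F_{jj} = d_j for j ≤ l and F_{jj} = 0 for j > l. Then the derivative f'(0) satisfies the linear system [ (1/l)·K·F + 2γ_A·I + (2γ_I/N²)·K·L ] · f'(0) = −(1/m)·K_i·μ_i(0) − 2γ_A·f(0) − (2γ_I/(m+n)²)·K_i·L_i·f_i(0). -/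
open Matrix

/-- Under the same setup, the derivative `f'(0)` satisfies the linear system
`[(1/l)·K·F + 2γ_A·I + (2γ_I/N²)·K·L]·f'(0) =
  −(1/m)·K_i·μ_i(0) − 2γ_A·f(0) − (2γ_I/(m+n)²)·K_i·L_i·f_i(0)`. -/
theorem bif_column_linear_system
    (l u m n : ℕ) (hl : 1 ≤ l) (hu : 1 ≤ u) (hm : 1 ≤ m) (hn : 1 ≤ n) (hml : m ≤ l)
    (K L : Matrix (Fin (l + u)) (Fin (l + u)) ℝ) (hK : K.IsSymm) (hL : L.IsSymm)
    (y : Fin l → ℝ) (γA γI : ℝ)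
    (σ : Fin (m + n) → Fin (l + u)) (hσ : Function.Injective σ)
    (hσl : ∀ j : Fin (m + n), (j : ℕ) < m → ((σ j : ℕ) < l))
    (Ki : Matrix (Fin (l + u)) (Fin (m + n)) ℝ)
    (hKi : ∀ (k : Fin (l + u)) (j : Fin (m + n)), Ki k j = K k (σ j))
    (Li : Matrix (Fin (m + n)) (Fin (m + n)) ℝ) (hLi : Li.IsSymm)
    (ℓ' : ℝ → ℝ → ℝ)
    (f : ℝ → Fin (l + u) → ℝ) (D : Fin (l + u) → ℝ)
    (hf : HasDerivAt f D 0)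
    (μ : ℝ → Fin (l + u) → ℝ)
    (hμ : ∀ (ε : ℝ) (j : Fin (l + u)),
      μ ε j = if h : (j : ℕ) < l then ℓ' (y ⟨j, h⟩) (f ε j) else 0)
    (μi : ℝ → Fin (m + n) → ℝ)
    (hμi : ∀ (ε : ℝ) (j : Fin (m + n)),
      μi ε j = if h : (j : ℕ) < m then ℓ' (y ⟨σ j, hσl j h⟩) (f ε (σ j)) else 0)
    (fi : ℝ → Fin (m + n) → ℝ)
    (hfi : ∀ (ε : ℝ) (j : Fin (m + n)), fi ε j = f ε (σ j))
    (hstat : ∀ᶠ ε in nhds (0 : ℝ),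
      (-(2 * γA)) • f ε =
        ((1 - ε) / (l : ℝ)) • K.mulVec (μ ε)
        + ((1 - ε) * (2 * γI) / ((l : ℝ) + (u : ℝ)) ^ 2) • K.mulVec (L.mulVec (f ε))
        + (ε / (m : ℝ)) • Ki.mulVec (μi ε)
        + (ε * (2 * γI) / ((m : ℝ) + (n : ℝ)) ^ 2) • Ki.mulVec (Li.mulVec (fi ε)))
    (d : Fin l → ℝ)
    (hd : ∀ j : Fin l,
      HasDerivAt (fun s => ℓ' (y j) s) (d j) (f 0 (Fin.castLE (Nat.le_add_right l u) j)))
    (F : Matrix (Fin (l + u)) (Fin (l + u)) ℝ)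
    (hF : F = Matrix.diagonal (fun j : Fin (l + u) =>
      if h : (j : ℕ) < l then d ⟨j, h⟩ else 0))
    :
    ((1 / (l : ℝ)) • (K * F) + (2 * γA) • 1
        + (2 * γI / ((l : ℝ) + (u : ℝ)) ^ 2) • (K * L)).mulVec D = (
      (-(1 / (m : ℝ))) • Ki.mulVec (μi 0)
      - (2 * γA) • f 0
      - (2 * γI / ((m : ℝ) + (n : ℝ)) ^ 2) • Ki.mulVec (Li.mulVec (fi 0))) := by
  have hfj : ∀ j, HasDerivAt (fun ε => f ε j) (D j) 0 := fun j => hasDerivAt_pi.mp hf j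
  -- derivative of μ components
  set Dμ : Fin (l + u) → ℝ :=
    fun j => if h : (j : ℕ) < l then d ⟨j, h⟩ * D j else 0 with hDμ
  have hμj : ∀ j, HasDerivAt (fun ε => μ ε j) (Dμ j) 0 := by
    intro j
    by_cases h : (j : ℕ) < l
    · have hcast : (Fin.castLE (Nat.le_add_right l u) (⟨(j : ℕ), h⟩ : Fin l)) = j := by
        ext; rfl
      have h1 : HasDerivAt (fun ε => ℓ' (y ⟨j, h⟩) (f ε j)) (d ⟨j, h⟩ * D j) 0 := by
        have h2 := hd ⟨j, h⟩
        rw [hcast] at h2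
        exact h2.comp 0 (hfj j)
      have heq : (fun ε => μ ε j) = fun ε => ℓ' (y ⟨j, h⟩) (f ε j) := by
        funext ε; rw [hμ, dif_pos h]
      rw [heq, hDμ]; simp only [dif_pos h]; exact h1
    · have heq : (fun ε => μ ε j) = fun _ => (0 : ℝ) := by
        funext ε; rw [hμ, dif_neg h]
      rw [heq]
      simpa [hDμ, h] using hasDerivAt_const (0 : ℝ) (0 : ℝ)
  -- derivative of μi components
  set Dμi : Fin (m + n) → ℝ :=
    fun j => if h : (j : ℕ) < m then d ⟨σ j, hσl j h⟩ * D (σ j) else 0 with hDμi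
  have hμij : ∀ j, HasDerivAt (fun ε => μi ε j) (Dμi j) 0 := by
    intro j
    by_cases h : (j : ℕ) < m
    · have hcast : (Fin.castLE (Nat.le_add_right l u) (⟨(σ j : ℕ), hσl j h⟩ : Fin l)) = σ j := by
        ext; rfl
      have h1 : HasDerivAt (fun ε => ℓ' (y ⟨σ j, hσl j h⟩) (f ε (σ j)))
          (d ⟨σ j, hσl j h⟩ * D (σ j)) 0 := by
        have h2 := hd ⟨σ j, hσl j h⟩
        rw [hcast] at h2
        exact h2.comp 0 (hfj (σ j))
      have heq : (fun ε => μi ε j) = fun ε => ℓ' (y ⟨σ j, hσl j h⟩) (f ε (σ j)) := by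
        funext ε; rw [hμi, dif_pos h]
      rw [heq, hDμi]; simp only [dif_pos h]; exact h1
    · have heq : (fun ε => μi ε j) = fun _ => (0 : ℝ) := by
        funext ε; rw [hμi, dif_neg h]
      rw [heq]
      simpa [hDμi, h] using hasDerivAt_const (0 : ℝ) (0 : ℝ)
  have hfij : ∀ j, HasDerivAt (fun ε => fi ε j) (D (σ j)) 0 := by
    intro j
    have heq : (fun ε => fi ε j) = fun ε => f ε (σ j) := by funext ε; rw [hfi]
    rw [heq]; exact hfj (σ j)
  funext k
  -- the four sums
  have hS1 : HasDerivAt (fun ε => ∑ j, K k j * μ ε j) (∑ j, K k j * Dμ j) 0 :=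
    HasDerivAt.fun_sum fun j _ => (hμj j).const_mul (K k j)
  have hS2 : HasDerivAt (fun ε => ∑ j, K k j * ∑ i, L j i * f ε i)
      (∑ j, K k j * ∑ i, L j i * D i) 0 :=
    HasDerivAt.fun_sum fun j _ =>
      (HasDerivAt.fun_sum fun i _ => (hfj i).const_mul (L j i)).const_mul (K k j)
  have hS3 : HasDerivAt (fun ε => ∑ j, Ki k j * μi ε j) (∑ j, Ki k j * Dμi j) 0 :=
    HasDerivAt.fun_sum fun j _ => (hμij j).const_mul (Ki k j)
  have hS4 : HasDerivAt (fun ε => ∑ j, Ki k j * ∑ i, Li j i * fi ε i)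
      (∑ j, Ki k j * ∑ i, Li j i * D (σ i)) 0 :=
    HasDerivAt.fun_sum fun j _ =>
      (HasDerivAt.fun_sum fun i _ => (hfij i).const_mul (Li j i)).const_mul (Ki k j)
  -- scalar coefficient functions
  have ha1 : HasDerivAt (fun ε : ℝ => (1 - ε) / (l : ℝ)) ((-1 : ℝ) / (l : ℝ)) 0 := by
    simpa using ((hasDerivAt_id (0 : ℝ)).const_sub 1).div_const (l : ℝ)
  have ha2 : HasDerivAt (fun ε : ℝ => (1 - ε) * (2 * γI) / ((l : ℝ) + (u : ℝ)) ^ 2)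
      ((-1 : ℝ) * (2 * γI) / ((l : ℝ) + (u : ℝ)) ^ 2) 0 := by
    simpa using (((hasDerivAt_id (0 : ℝ)).const_sub 1).mul_const (2 * γI)).div_const
      (((l : ℝ) + (u : ℝ)) ^ 2)
  have ha3 : HasDerivAt (fun ε : ℝ => ε / (m : ℝ)) ((1 : ℝ) / (m : ℝ)) 0 := by
    simpa using (hasDerivAt_id (0 : ℝ)).div_const (m : ℝ)
  have ha4 : HasDerivAt (fun ε : ℝ => ε * (2 * γI) / ((m : ℝ) + (n : ℝ)) ^ 2)
      ((1 : ℝ) * (2 * γI) / ((m : ℝ) + (n : ℝ)) ^ 2) 0 := by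
    simpa using ((hasDerivAt_id (0 : ℝ)).mul_const (2 * γI)).div_const
      (((m : ℝ) + (n : ℝ)) ^ 2)
  have hR := (((ha1.mul hS1).add (ha2.mul hS2)).add (ha3.mul hS3)).add (ha4.mul hS4)
  -- eventual equality componentwise
  have heq : (fun ε => (-(2 * γA)) * f ε k) =ᶠ[nhds (0 : ℝ)]
      (fun ε => ((1 - ε) / (l : ℝ)) * (∑ j, K k j * μ ε j)
        + ((1 - ε) * (2 * γI) / ((l : ℝ) + (u : ℝ)) ^ 2) * (∑ j, K k j * ∑ i, L j i * f ε i)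
        + (ε / (m : ℝ)) * (∑ j, Ki k j * μi ε j)
        + (ε * (2 * γI) / ((m : ℝ) + (n : ℝ)) ^ 2) * (∑ j, Ki k j * ∑ i, Li j i * fi ε i)) := by
    filter_upwards [hstat] with ε hε
    have h2 := congrFun hε k
    simp only [Pi.add_apply, Pi.smul_apply, Pi.neg_apply, smul_eq_mul,
      Matrix.mulVec, dotProduct] at h2
    convert h2 using 2
  have hL2 : HasDerivAt (fun ε => (-(2 * γA)) * f ε k) (-(2 * γA) * D k) 0 :=
    (hfj k).const_mul _
  have hderiv := hL2.unique (hR.congr_of_eventuallyEq heq)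
  -- base equation at ε = 0
  have hbase := congrFun hstat.self_of_nhds k
  simp only [Pi.add_apply, Pi.smul_apply, smul_eq_mul, Matrix.mulVec, dotProduct] at hbase
  -- massage the goal
  have hFD : F.mulVec D = Dμ := by
    funext j
    rw [hF, Matrix.mulVec_diagonal, hDμ]
    by_cases h : (j : ℕ) < l
    · simp [h]
    · simp [h]
  have hKF : (K * F).mulVec D = K.mulVec Dμ := by
    rw [← Matrix.mulVec_mulVec, hFD]
  have hKL : (K * L).mulVec D = K.mulVec (L.mulVec D) := (Matrix.mulVec_mulVec D K L).symm
  simp only [Matrix.add_mulVec, Matrix.smul_mulVec, hKF, hKL, Matrix.one_mulVec,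
    Pi.add_apply, Pi.smul_apply, Pi.sub_apply, Pi.neg_apply, smul_eq_mul]
  simp only [Matrix.mulVec, dotProduct]
  linear_combination -hbase - hderiv
end

section
/- Take the Huber loss derivative ℓ'_h with parameter h > 0 (Laplacian support vector machine with Huberized hinge loss), and assume y_j ∈ {−1, +1} for all j ≤ l. Assume f : ℝ → ℝ^N is differentiable at ε = 0, satisfies the perturbed stationarity equation on a neighborhood of 0, and that |1 − y_j·f(0)_j| ≠ h for every j ≤ l. Call an index j ≤ l a support vector if |1 − y_j·f(0)_j| < h, and let I_sv ∈ ℝ^{N×N} be the diagonal matrix whose j-th diagonal entry is 1 if j ≤ l is a support vector and 0 otherwise. Set H = (1/(2lh))·K·I_sv + 2γ_A·I + (2γ_I/N²)·K·L. If H is invertible, then f'(0) = H^{-1} · [ −(1/m)·K_i·μ_i(0) − 2γ_A·f(0) − (2γ_I/(m+n)²)·K_i·L_i·f_i(0) ]. -/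
open Matrix

lemma huber_deriv_aux (h : ℝ) (hh : 0 < h) (a : ℝ) (ha : a = 1 ∨ a = -1)
    (g : ℝ → ℝ) (d : ℝ) (hg : HasDerivAt g d 0)
    (hne : |1 - a * g 0| ≠ h)
    (ℓ' : ℝ → ℝ → ℝ)
    (hℓ' : ∀ b s : ℝ, ℓ' b s =
      if 1 + h < b * s then 0
      else if |1 - b * s| ≤ h then -b * (1 + h - b * s) / (2 * h)
      else -b) :
    HasDerivAt (fun ε => ℓ' a (g ε))
      ((if |1 - a * g 0| < h then 1 / (2 * h) else 0) * d) 0 := by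
  have ha2 : a * a = 1 := by rcases ha with h1 | h1 <;> rw [h1] <;> ring
  have hcont : ContinuousAt g 0 := hg.continuousAt
  have habs : Filter.Tendsto (fun ε => |1 - a * g ε|) (nhds 0) (nhds (|1 - a * g 0|)) :=
    ((continuousAt_const.sub (continuousAt_const.mul hcont)).abs)
  have hprod : Filter.Tendsto (fun ε => a * g ε) (nhds 0) (nhds (a * g 0)) :=
    continuousAt_const.mul hcont
  rcases lt_or_gt_of_ne hne with hlt | hgt
  · rw [if_pos hlt]
    have hev : ∀ᶠ ε in nhds 0, |1 - a * g ε| < h := habs.eventually_lt_const hlt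
    have hderiv : HasDerivAt (fun ε => (g ε - a * (1 + h)) / (2 * h)) (d / (2 * h)) 0 :=
      (hg.sub_const (a * (1 + h))).div_const (2 * h)
    have heq : (fun ε => ℓ' a (g ε)) =ᶠ[nhds 0] fun ε => (g ε - a * (1 + h)) / (2 * h) := by
      filter_upwards [hev] with ε hε
      have h1 : ¬ (1 + h < a * g ε) := by
        have := abs_lt.mp hε
        nlinarith [this.1, this.2]
      rw [hℓ' a (g ε), if_neg h1, if_pos hε.le]
      have : -a * (1 + h - a * g ε) = g ε - a * (1 + h) := by linear_combination (g ε) * ha2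
      rw [this]
    rw [show 1 / (2 * h) * d = d / (2 * h) by ring]
    exact hderiv.congr_of_eventuallyEq heq
  · rw [if_neg (not_lt.mpr hgt.le), zero_mul]
    rcases lt_abs.mp hgt with hc | hc
    · have hev : ∀ᶠ ε in nhds 0, a * g ε < 1 - h := by
        have : a * g 0 < 1 - h := by linarith
        exact hprod.eventually_lt_const this
      have heq : (fun ε => ℓ' a (g ε)) =ᶠ[nhds 0] fun _ => -a := by
        filter_upwards [hev] with ε hε
        have h1 : ¬ (1 + h < a * g ε) := by nlinarith
        have h2 : ¬ (|1 - a * g ε| ≤ h) := by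
          rw [abs_le]; push_neg; intro hcon; linarith
        rw [hℓ' a (g ε), if_neg h1, if_neg h2]
      exact (hasDerivAt_const 0 (-a)).congr_of_eventuallyEq heq
    · have hev : ∀ᶠ ε in nhds 0, 1 + h < a * g ε := by
        have : 1 + h < a * g 0 := by linarith
        exact hprod.eventually_const_lt this
      have heq : (fun ε => ℓ' a (g ε)) =ᶠ[nhds 0] fun _ => (0:ℝ) := by
        filter_upwards [hev] with ε hε
        rw [hℓ' a (g ε), if_pos hε]
      exact (hasDerivAt_const 0 (0:ℝ)).congr_of_eventuallyEq heq

lemma mulVec_hasDerivAt_aux {p q : ℕ} (A : Matrix (Fin p) (Fin q) ℝ)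
    {g : ℝ → Fin q → ℝ} {g' : Fin q → ℝ} (hg : HasDerivAt g g' 0) :
    HasDerivAt (fun ε => A.mulVec (g ε)) (A.mulVec g') 0 := by
  rw [hasDerivAt_pi] at hg ⊢
  intro k
  simp only [Matrix.mulVec, dotProduct]
  exact HasDerivAt.fun_sum fun j _ => (hg j).const_mul (A k j)

/-- For the Huberized hinge loss with parameter `h > 0` (LapSVM), labels
`y_j ∈ {−1, +1}`, curve `f` differentiable at `ε = 0` satisfying the perturbed stationarity
equation near `0`, with no labeled point on the gluing boundary (`|1 − y_j·f(0)_j| ≠ h`), if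
`H = (1/(2lh))·K·I_sv + 2γ_A·I + (2γ_I/N²)·K·L` is invertible (where `I_sv` is the diagonal
indicator of support vectors, i.e. labeled indices with `|1 − y_j·f(0)_j| < h`), then
`f'(0) = H⁻¹·[−(1/m)·K_i·μ_i(0) − 2γ_A·f(0) − (2γ_I/(m+n)²)·K_i·L_i·f_i(0)]`. -/
theorem bif_column_formula_lapsvm
    (l u m n : ℕ) (hl : 1 ≤ l) (hu : 1 ≤ u) (hm : 1 ≤ m) (hn : 1 ≤ n) (hml : m ≤ l)
    (K L : Matrix (Fin (l + u)) (Fin (l + u)) ℝ) (hK : K.IsSymm) (hL : L.IsSymm)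
    (y : Fin l → ℝ) (hy : ∀ j : Fin l, y j = 1 ∨ y j = -1)
    (γA γI : ℝ) (h : ℝ) (hh : 0 < h)
    (σ : Fin (m + n) → Fin (l + u)) (hσ : Function.Injective σ)
    (hσl : ∀ j : Fin (m + n), (j : ℕ) < m → ((σ j : ℕ) < l))
    (Ki : Matrix (Fin (l + u)) (Fin (m + n)) ℝ)
    (hKi : ∀ (k : Fin (l + u)) (j : Fin (m + n)), Ki k j = K k (σ j))
    (Li : Matrix (Fin (m + n)) (Fin (m + n)) ℝ) (hLi : Li.IsSymm)
    (ℓ' : ℝ → ℝ → ℝ)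
    (hℓ' : ∀ a s : ℝ, ℓ' a s =
      if 1 + h < a * s then 0
      else if |1 - a * s| ≤ h then -a * (1 + h - a * s) / (2 * h)
      else -a)
    (f : ℝ → Fin (l + u) → ℝ) (D : Fin (l + u) → ℝ)
    (hf : HasDerivAt f D 0)
    (hbd : ∀ j : Fin l, |1 - y j * f 0 (Fin.castLE (Nat.le_add_right l u) j)| ≠ h)
    (μ : ℝ → Fin (l + u) → ℝ)
    (hμ : ∀ (ε : ℝ) (j : Fin (l + u)),
      μ ε j = if hj : (j : ℕ) < l then ℓ' (y ⟨j, hj⟩) (f ε j) else 0)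
    (μi : ℝ → Fin (m + n) → ℝ)
    (hμi : ∀ (ε : ℝ) (j : Fin (m + n)),
      μi ε j = if hj : (j : ℕ) < m then ℓ' (y ⟨σ j, hσl j hj⟩) (f ε (σ j)) else 0)
    (fi : ℝ → Fin (m + n) → ℝ)
    (hfi : ∀ (ε : ℝ) (j : Fin (m + n)), fi ε j = f ε (σ j))
    (hstat : ∀ᶠ ε in nhds (0 : ℝ),
      (-(2 * γA)) • f ε =
        ((1 - ε) / (l : ℝ)) • K.mulVec (μ ε)
        + ((1 - ε) * (2 * γI) / ((l : ℝ) + (u : ℝ)) ^ 2) • K.mulVec (L.mulVec (f ε))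
        + (ε / (m : ℝ)) • Ki.mulVec (μi ε)
        + (ε * (2 * γI) / ((m : ℝ) + (n : ℝ)) ^ 2) • Ki.mulVec (Li.mulVec (fi ε)))
    (Isv : Matrix (Fin (l + u)) (Fin (l + u)) ℝ)
    (hIsv : Isv = Matrix.diagonal (fun j : Fin (l + u) =>
      if hj : (j : ℕ) < l then
        (if |1 - y ⟨j, hj⟩ * f 0 j| < h then (1 : ℝ) else 0)
      else 0))
    (H : Matrix (Fin (l + u)) (Fin (l + u)) ℝ)
    (hH : H = (1 / (2 * (l : ℝ) * h)) • (K * Isv) + (2 * γA) • 1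
        + (2 * γI / ((l : ℝ) + (u : ℝ)) ^ 2) • (K * L))
    (hHinv : IsUnit H.det) :
    D = H⁻¹.mulVec (
      (-(1 / (m : ℝ))) • Ki.mulVec (μi 0)
      - (2 * γA) • f 0
      - (2 * γI / ((m : ℝ) + (n : ℝ)) ^ 2) • Ki.mulVec (Li.mulVec (fi 0))) := by
  have hDj : ∀ j : Fin (l + u), HasDerivAt (fun ε => f ε j) (D j) 0 :=
    fun j => hasDerivAt_pi.mp hf j
  -- derivative of μ
  set μ' : Fin (l + u) → ℝ := fun j =>
    if hj : (j : ℕ) < l then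
      (if |1 - y ⟨j, hj⟩ * f 0 j| < h then 1 / (2 * h) else 0) * D j
    else 0 with hμ'def
  have hμder : HasDerivAt μ μ' 0 := by
    rw [hasDerivAt_pi]
    intro j
    by_cases hj : (j : ℕ) < l
    · have hcast : Fin.castLE (Nat.le_add_right l u) (⟨(j : ℕ), hj⟩ : Fin l) = j := by
        apply Fin.ext; rfl
      have hne : |1 - y ⟨(j : ℕ), hj⟩ * f 0 j| ≠ h := by
        have := hbd ⟨(j : ℕ), hj⟩
        rwa [hcast] at this
      have := huber_deriv_aux h hh (y ⟨(j : ℕ), hj⟩) (hy _) (fun ε => f ε j) (D j)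
        (hDj j) hne ℓ' hℓ'
      have hfun : (fun ε => μ ε j) = fun ε => ℓ' (y ⟨(j : ℕ), hj⟩) (f ε j) := by
        funext ε; rw [hμ ε j, dif_pos hj]
      rw [hμ'def]
      simp only [dif_pos hj]
      rw [hfun]
      exact this
    · have hfun : (fun ε => μ ε j) = fun _ => (0 : ℝ) := by
        funext ε; rw [hμ ε j, dif_neg hj]
      rw [hμ'def]
      simp only [dif_neg hj]
      rw [hfun]
      exact hasDerivAt_const 0 0
  -- derivative of μi
  set μi' : Fin (m + n) → ℝ := fun j =>
    if hj : (j : ℕ) < m then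
      (if |1 - y ⟨σ j, hσl j hj⟩ * f 0 (σ j)| < h then 1 / (2 * h) else 0) * D (σ j)
    else 0 with hμi'def
  have hμider : HasDerivAt μi μi' 0 := by
    rw [hasDerivAt_pi]
    intro j
    by_cases hj : (j : ℕ) < m
    · have hcast : Fin.castLE (Nat.le_add_right l u) (⟨(σ j : ℕ), hσl j hj⟩ : Fin l) = σ j := by
        apply Fin.ext; rfl
      have hne : |1 - y ⟨(σ j : ℕ), hσl j hj⟩ * f 0 (σ j)| ≠ h := by
        have := hbd ⟨(σ j : ℕ), hσl j hj⟩
        rwa [hcast] at this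
      have := huber_deriv_aux h hh (y ⟨(σ j : ℕ), hσl j hj⟩) (hy _) (fun ε => f ε (σ j))
        (D (σ j)) (hDj (σ j)) hne ℓ' hℓ'
      have hfun : (fun ε => μi ε j) = fun ε => ℓ' (y ⟨(σ j : ℕ), hσl j hj⟩) (f ε (σ j)) := by
        funext ε; rw [hμi ε j, dif_pos hj]
      rw [hμi'def]
      simp only [dif_pos hj]
      rw [hfun]
      exact this
    · have hfun : (fun ε => μi ε j) = fun _ => (0 : ℝ) := by
        funext ε; rw [hμi ε j, dif_neg hj]
      rw [hμi'def]
      simp only [dif_neg hj]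
      rw [hfun]
      exact hasDerivAt_const 0 0
  -- derivative of fi
  have hfider : HasDerivAt fi (fun j => D (σ j)) 0 := by
    rw [hasDerivAt_pi]
    intro j
    have hfun : (fun ε => fi ε j) = fun ε => f ε (σ j) := by
      funext ε; rw [hfi ε j]
    rw [hfun]
    exact hDj (σ j)
  -- scalar derivatives
  have hc1 : HasDerivAt (fun ε : ℝ => (1 - ε) / (l : ℝ)) ((-1) / (l : ℝ)) 0 :=
    (((hasDerivAt_id (0:ℝ)).const_sub 1).div_const (l : ℝ))
  have hc2 : HasDerivAt (fun ε : ℝ => (1 - ε) * (2 * γI) / ((l : ℝ) + (u : ℝ)) ^ 2)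
      ((-1) * (2 * γI) / ((l : ℝ) + (u : ℝ)) ^ 2) 0 :=
    ((((hasDerivAt_id (0:ℝ)).const_sub 1).mul_const (2 * γI)).div_const _)
  have hc3 : HasDerivAt (fun ε : ℝ => ε / (m : ℝ)) (1 / (m : ℝ)) 0 :=
    ((hasDerivAt_id (0:ℝ)).div_const (m : ℝ))
  have hc4 : HasDerivAt (fun ε : ℝ => ε * (2 * γI) / ((m : ℝ) + (n : ℝ)) ^ 2)
      (1 * (2 * γI) / ((m : ℝ) + (n : ℝ)) ^ 2) 0 :=
    (((hasDerivAt_id (0:ℝ)).mul_const (2 * γI)).div_const _)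
  -- each term of the RHS
  have T1 := hc1.smul (mulVec_hasDerivAt_aux K hμder)
  have T2 := hc2.smul (mulVec_hasDerivAt_aux K (mulVec_hasDerivAt_aux L hf))
  have T3 := hc3.smul (mulVec_hasDerivAt_aux Ki hμider)
  have T4 := hc4.smul (mulVec_hasDerivAt_aux Ki (mulVec_hasDerivAt_aux Li hfider))
  have hbig := ((T1.add T2).add T3).add T4
  have hLHS : HasDerivAt (fun ε => (-(2 * γA)) • f ε) ((-(2 * γA)) • D) 0 :=
    hf.const_smul (-(2 * γA))
  have E1 := (hLHS.congr_of_eventuallyEq (hstat.mono fun ε hε => hε.symm)).unique hbig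
  have E0 := hstat.self_of_nhds
  -- relate μ' to Isv
  have hμ'eq : μ' = (1 / (2 * h)) • Isv.mulVec D := by
    funext j
    rw [hμ'def, hIsv]
    simp only [Pi.smul_apply, Matrix.mulVec_diagonal, smul_eq_mul]
    by_cases hj : (j : ℕ) < l
    · simp only [dif_pos hj]
      by_cases hsv : |1 - y ⟨(j : ℕ), hj⟩ * f 0 j| < h
      · simp [hsv]
      · simp [hsv]
    · simp [dif_neg hj]
  rw [hμ'eq, Matrix.mulVec_smul] at E1
  -- main algebraic step
  have key : H.mulVec D =
      (-(1 / (m : ℝ))) • Ki.mulVec (μi 0)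
      - (2 * γA) • f 0
      - (2 * γI / ((m : ℝ) + (n : ℝ)) ^ 2) • Ki.mulVec (Li.mulVec (fi 0)) := by
    rw [hH]
    rw [Matrix.add_mulVec, Matrix.add_mulVec, Matrix.smul_mulVec,
      Matrix.smul_mulVec, Matrix.smul_mulVec, Matrix.one_mulVec,
      ← Matrix.mulVec_mulVec D K Isv, ← Matrix.mulVec_mulVec D K L]
    funext i
    have e1 := congrFun E1 i
    have e0 := congrFun E0 i
    simp only [Pi.add_apply, Pi.smul_apply, Pi.sub_apply, smul_eq_mul] at e1 e0 ⊢
    linear_combination -e1 - e0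
  rw [← key, Matrix.mulVec_mulVec, Matrix.nonsing_inv_mul H hHinv, Matrix.one_mulVec]
end
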